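/- For positive definite n×n matrices A and B, the function t ↦ d_l(A, A♯_t B) is monotonically increasing on [0,1], where A♯_t B = A^(1/2)(A^(-1/2)BA^(-1/2))^t A^(1/2) is the weighted geometric mean and d_l is the Log-Determinant metric. -/

import Mathlib

open Matrix ComplexOrder

/-- Matrix power via functional calculus (spectral decomposition), for Hermitian matrices. -/
noncomputable def mpow {n : Type*} [Fintype n] [DecidableEq n]
    (A : Matrix n n ℂ) (p : ℝ) : Matrix n n ℂ :=
  if hA : A.IsHermitian then
    (hA.eigenvectorUnitary : Matrix n n ℂ) *
      Matrix.diagonal (fun i => ((hA.eigenvalues i ^ p : ℝ) : ℂ)) *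
      star (hA.eigenvectorUnitary : Matrix n n ℂ)
  else 0

/-- Hellinger distance. -/
noncomputable def dh {n : Type*} [Fintype n] [DecidableEq n]
    (A B : Matrix n n ℂ) : ℝ :=
  Real.sqrt ((Matrix.trace (A + B)).re
    - 2 * (Matrix.trace (mpow A (1/2) * mpow B (1/2))).re)

/-- Bures–Wasserstein distance. -/
noncomputable def db {n : Type*} [Fintype n] [DecidableEq n]
    (A B : Matrix n n ℂ) : ℝ :=
  Real.sqrt ((Matrix.trace (A + B)).re
    - 2 * (Matrix.trace (mpow (mpow A (1/2) * B * mpow A (1/2)) (1/2))).re)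

/-- Log-determinant distance. -/
noncomputable def dl {n : Type*} [Fintype n] [DecidableEq n]
    (A B : Matrix n n ℂ) : ℝ :=
  Real.log (((A + B) / 2).det).re
    - (1/2) * (Real.log (A.det.re) + Real.log (B.det.re))

/-- Matrix power mean μ_p(t;A,B) = (t A^p + (1-t) B^p)^{1/p}. -/
noncomputable def mpm {n : Type*} [Fintype n] [DecidableEq n]
    (p t : ℝ) (A B : Matrix n n ℂ) : Matrix n n ℂ :=
  mpow ((t : ℂ) • mpow A p + ((1 - t : ℝ) : ℂ) • mpow B p) (1/p)

/-- Weighted geometric mean A ♯_t B. -/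
noncomputable def sharp {n : Type*} [Fintype n] [DecidableEq n]
    (t : ℝ) (A B : Matrix n n ℂ) : Matrix n n ℂ :=
  mpow A (1/2) * mpow (mpow A (-(1/2)) * B * mpow A (-(1/2))) t * mpow A (1/2)

/-- Quantum fidelity. -/
noncomputable def fid {n : Type*} [Fintype n] [DecidableEq n]
    (A B : Matrix n n ℂ) : ℝ :=
  ((Matrix.trace (mpow (mpow A (1/2) * B * mpow A (1/2)) (1/2))).re) ^ 2

/-! Write `A^{-1/2} B A^{-1/2} = U diag(μ) U*` with `U` unitary and `μᵢ > 0`. The congruence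
`X ↦ G X G*`, `G = A^{1/2} U`, maps `1` to `A` and `diag(μᵢ ^ r)` to `A ♯_r B`. Since `d_l` is
invariant under congruences,
`d_l(A, A ♯_r B) = d_l(1, diag(μᵢ ^ r)) = ∑ᵢ log cosh (r log μᵢ / 2)`,
which increases with `r ≥ 0` because `cosh` increases with `|x|`. -/

open Real in
theorem Real.one_add_exp_div_two (a : ℝ) : (1 + exp a) / 2 = cosh (a / 2) * exp (a / 2) := by
  rw [cosh_eq, div_mul_eq_mul_div, add_mul, ← exp_add, ← exp_add, neg_add_cancel, add_halves,
    exp_zero, add_comm]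

namespace Matrix

variable {n : Type*} [Fintype n] [DecidableEq n]

theorem div_two_eq_smul (X : Matrix n n ℂ) : X / 2 = (2⁻¹ : ℝ) • X := by
  rw [div_eq_mul_inv, inv_eq_right_inv (B := (2⁻¹ : ℝ) • 1)]
  · simp
  · rw [Matrix.mul_smul, mul_one]
    ext i j
    rcases eq_or_ne i j with rfl | h <;> simp [*, ofNat_apply]

theorem det_mul_mul_conjTranspose (G X : Matrix n n ℂ) :
    (G * X * Gᴴ).det = (Complex.normSq G.det : ℂ) * X.det := by
  rw [det_mul, det_mul, det_conjTranspose, ← Complex.mul_conj, Complex.star_def]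
  ring

theorem PosDef.det_re_pos {X : Matrix n n ℂ} (hX : X.PosDef) : 0 < X.det.re :=
  (Complex.pos_iff.mp hX.det_pos).1

end Matrix

open Matrix Real

section

variable {n : Type*} [Fintype n] [DecidableEq n]

theorem mpow_of_isHermitian {A : Matrix n n ℂ} (hA : A.IsHermitian) (p : ℝ) :
    mpow A p = (hA.eigenvectorUnitary : Matrix n n ℂ) *
      diagonal (fun i => ((hA.eigenvalues i ^ p : ℝ) : ℂ)) *
      star (hA.eigenvectorUnitary : Matrix n n ℂ) := by
  rw [mpow, dif_pos hA]

theorem isHermitian_mpow (A : Matrix n n ℂ) (p : ℝ) : (mpow A p).IsHermitian := by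
  unfold mpow
  split
  · exact isHermitian_mul_mul_conjTranspose _
      (isHermitian_diagonal_iff.mpr fun i => by simp [IsSelfAdjoint, Complex.conj_ofReal])
  · exact isHermitian_zero

theorem mpow_mul_mpow {A : Matrix n n ℂ} (hA : A.PosDef) (p q : ℝ) :
    mpow A p * mpow A q = mpow A (p + q) := by
  have h := hA.isHermitian
  have hU : ∀ X, star (h.eigenvectorUnitary : Matrix n n ℂ) * (h.eigenvectorUnitary * X) = X :=
    fun X => by rw [← mul_assoc, Unitary.coe_star_mul_self, one_mul]
  simp only [mpow_of_isHermitian h, mul_assoc, hU]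
  rw [← mul_assoc (diagonal _), diagonal_mul_diagonal]
  congr 3
  funext i
  rw [← Complex.ofReal_mul, ← rpow_add (hA.eigenvalues_pos i)]

theorem mpow_zero {A : Matrix n n ℂ} (hA : A.IsHermitian) : mpow A 0 = 1 := by
  simp [mpow_of_isHermitian hA]

theorem mpow_one {A : Matrix n n ℂ} (hA : A.IsHermitian) : mpow A 1 = A := by
  simpa [mpow_of_isHermitian hA, Function.comp_def] using hA.spectral_theorem.symm

theorem dl_mul_mul_conjTranspose {G X Y : Matrix n n ℂ} (hG : G.det ≠ 0)
    (hX : X.PosDef) (hY : Y.PosDef) : dl (G * X * Gᴴ) (G * Y * Gᴴ) = dl X Y := by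
  have hnormSq : 0 < Complex.normSq G.det := Complex.normSq_pos.mpr hG
  have hXY : ((X + Y) / 2).PosDef := by
    rw [div_two_eq_smul]; exact (hX.add hY).smul (by norm_num)
  have hsum : (G * X * Gᴴ + G * Y * Gᴴ) / 2 = G * ((X + Y) / 2) * Gᴴ := by
    rw [div_two_eq_smul, div_two_eq_smul, ← Matrix.add_mul, ← Matrix.mul_add, Matrix.mul_smul,
      Matrix.smul_mul]
  simp only [dl, hsum, det_mul_mul_conjTranspose, Complex.re_ofReal_mul]
  rw [log_mul hnormSq.ne' hXY.det_re_pos.ne', log_mul hnormSq.ne' hX.det_re_pos.ne',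
    log_mul hnormSq.ne' hY.det_re_pos.ne']
  ring

theorem dl_one_diagonal_exp (a : n → ℝ) :
    dl 1 (diagonal fun i => ((exp (a i) : ℝ) : ℂ)) = ∑ i, log (cosh (a i / 2)) := by
  have hmid : ((1 : Matrix n n ℂ) + diagonal fun i => ((exp (a i) : ℝ) : ℂ)) / 2
      = diagonal fun i => (((1 + exp (a i)) / 2 : ℝ) : ℂ) := by
    rw [div_two_eq_smul, ← diagonal_one, diagonal_add, ← diagonal_smul]
    congr 1
    funext i
    simp only [Pi.smul_apply, Complex.real_smul]
    push_cast
    ring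
  have hlog : ∀ i, log ((1 + exp (a i)) / 2) = log (cosh (a i / 2)) + a i / 2 := fun i => by
    rw [one_add_exp_div_two, log_mul (cosh_pos _).ne' (exp_pos _).ne', log_exp]
  simp only [dl, hmid, det_one, det_diagonal, ← Complex.ofReal_prod, Complex.ofReal_re,
    Complex.one_re, log_one, ← exp_sum, log_exp]
  rw [log_prod fun i _ => by positivity]
  simp only [hlog, Finset.sum_add_distrib, ← Finset.sum_div]
  ring

theorem exists_mpow_eq_unitary_mul_diagonal {C : Matrix n n ℂ} (hC : C.PosDef) :
    ∃ (U : Matrix n n ℂ) (μ : n → ℝ), U ∈ unitary (Matrix n n ℂ) ∧ (∀ i, 0 < μ i) ∧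
      ∀ r : ℝ, mpow C r = U * diagonal (fun i => ((μ i ^ r : ℝ) : ℂ)) * star U :=
  ⟨_, _, hC.isHermitian.eigenvectorUnitary.2, hC.eigenvalues_pos,
    mpow_of_isHermitian hC.isHermitian⟩

theorem exists_dl_sharp_eq_sum_log_cosh {A B : Matrix n n ℂ} (hA : A.PosDef) (hB : B.PosDef) :
    ∃ c : n → ℝ, ∀ r : ℝ, dl A (sharp r A B) = ∑ i, log (cosh (c i * r)) := by
  set H := mpow A (1 / 2) with hH
  set Hi := mpow A (-(1 / 2)) with hHi
  have hHH : H * H = A := by rw [mpow_mul_mpow hA]; norm_num [mpow_one hA.isHermitian]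
  have hHHi : H * Hi = 1 := by rw [mpow_mul_mpow hA]; norm_num [mpow_zero hA.isHermitian]
  have hC : (Hi * B * Hi).PosDef := by
    have hHi : IsUnit Hi := (isUnit_iff_isUnit_det Hi).mpr (isUnit_det_of_left_inverse hHHi)
    have := hB.mul_mul_conjTranspose_same (vecMul_injective_of_isUnit hHi)
    rwa [(isHermitian_mpow A _).eq] at this
  obtain ⟨U, μ, hU, hμ, hCpow⟩ := exists_mpow_eq_unitary_mul_diagonal hC
  set G := H * U
  have hGstar : Gᴴ = star U * H := by
    rw [conjTranspose_mul, (isHermitian_mpow A _).eq, star_eq_conjTranspose]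
  have hG : G.det ≠ 0 := by
    rw [det_mul]
    exact mul_ne_zero (isUnit_det_of_left_inverse (mul_eq_one_comm.mp hHHi)).ne_zero
      (isUnit_det_of_left_inverse (Unitary.star_mul_self_of_mem hU)).ne_zero
  have hGA : G * 1 * Gᴴ = A := by
    rw [mul_one, hGstar, mul_assoc, ← mul_assoc U, Unitary.mul_star_self_of_mem hU, one_mul, hHH]
  have hGsharp : ∀ r : ℝ,
      G * diagonal (fun i => ((μ i ^ r : ℝ) : ℂ)) * Gᴴ = sharp r A B := fun r => by
    rw [sharp, ← hH, ← hHi, hCpow, hGstar]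
    simp only [G, mul_assoc]
  refine ⟨fun i => log (μ i) / 2, fun r => ?_⟩
  calc dl A (sharp r A B)
      = dl (G * 1 * Gᴴ) (G * diagonal (fun i => ((μ i ^ r : ℝ) : ℂ)) * Gᴴ) := by
        rw [hGA, hGsharp]
    _ = ∑ i, log (cosh (log (μ i) / 2 * r)) := by
        simp only [rpow_def_of_pos (hμ _)]
        rw [dl_mul_mul_conjTranspose hG PosDef.one
          (posDef_diagonal_iff.mpr fun i => Complex.zero_lt_real.mpr (exp_pos _)),
          dl_one_diagonal_exp]
        simp only [div_mul_eq_mul_div]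

end

theorem stmt14_general {n : Type*} [Fintype n] [DecidableEq n]
    {A B : Matrix n n ℂ} (hA : A.PosDef) (hB : B.PosDef)
    {t s : ℝ} (ht : 0 ≤ t) (hts : t ≤ s) :
    dl A (sharp t A B) ≤ dl A (sharp s A B) := by
  obtain ⟨c, hc⟩ := exists_dl_sharp_eq_sum_log_cosh hA hB
  rw [hc, hc]
  refine Finset.sum_le_sum fun i _ => log_le_log (cosh_pos _) (cosh_le_cosh.mpr ?_)
  rw [abs_mul, abs_mul, abs_of_nonneg ht, abs_of_nonneg (ht.trans hts)]
  exact mul_le_mul_of_nonneg_left hts (abs_nonneg _)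

theorem stmt14 {n : Type*} [Fintype n] [DecidableEq n]
    {A B : Matrix n n ℂ} (hA : A.PosDef) (hB : B.PosDef)
    {t s : ℝ} (ht : 0 ≤ t) (hts : t ≤ s) (hs : s ≤ 1) :
    dl A (sharp t A B) ≤ dl A (sharp s A B) :=
  stmt14_general hA hB ht hts
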